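/- Let Δ be a collection of complex lines L in ℂ^m whose union equals ℂ^m. Let E be a closed subset of ℂ^m such that for each L ∈ Δ, the set E ∩ L, considered as a subset of the one-dimensional complex line L (with an affine coordinate w on L such that the coordinates of ℂ^m restricted to L are linear functions of w), is non-thin at ∞ in L ≅ ℂ. Then E is non-thin at ∞ as a subset of ℂ^m. -/

import Mathlib

open Filter Metric

noncomputable section

/-- An upper semicontinuous `EReal`-valued function `u` (never `+∞`) on `U ⊆ ℂ` is
*subharmonic* on `U` if it satisfies the harmonic-polynomial maximum criterion:
whenever `u ≤ Re p` on a circle contained (with its disc) in `U`, for a complex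
polynomial `p`, then `u ≤ Re p` throughout the corresponding closed disc. -/
def SubharmonicOn' (u : ℂ → EReal) (U : Set ℂ) : Prop :=
  UpperSemicontinuousOn u U ∧ (∀ z ∈ U, u z < ⊤) ∧
  ∀ (c : ℂ) (r : ℝ), 0 < r → closedBall c r ⊆ U →
    ∀ p : Polynomial ℂ,
      (∀ z ∈ sphere c r, u z ≤ ((p.eval z).re : EReal)) →
      ∀ z ∈ closedBall c r, u z ≤ ((p.eval z).re : EReal)

/-- A function `u : ℂ^m → [-∞,∞)` is *plurisubharmonic* on `U` if it is upper
semicontinuous on `U`, nowhere `+∞` on `U`, and its restriction to every complex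
line is subharmonic. -/
def PshOn {m : ℕ} (u : EuclideanSpace ℂ (Fin m) → EReal)
    (U : Set (EuclideanSpace ℂ (Fin m))) : Prop :=
  UpperSemicontinuousOn u U ∧ (∀ z ∈ U, u z < ⊤) ∧
  ∀ (a b : EuclideanSpace ℂ (Fin m)), b ≠ 0 →
    SubharmonicOn' (fun w => u (a + w • b)) {w : ℂ | a + w • b ∈ U}

/-- The class `𝕃` of plurisubharmonic functions on `ℂ^m` of minimal growth:
`u(z) - log |z| ≤ O(1)` as `|z| → ∞`. -/
def MinGrowth {m : ℕ} (u : EuclideanSpace ℂ (Fin m) → EReal) : Prop :=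
  PshOn u Set.univ ∧ ∃ C R₀ : ℝ, ∀ z, R₀ ≤ ‖z‖ → u z ≤ ((Real.log ‖z‖ + C : ℝ) : EReal)

/-- The pluricomplex Green function (Siciak extremal function) of `E ⊆ ℂ^m`:
`V_E(z) = sup { u(z) : u ∈ 𝕃, u ≤ 0 on E }`. -/
def greenFn {m : ℕ} (E : Set (EuclideanSpace ℂ (Fin m)))
    (z : EuclideanSpace ℂ (Fin m)) : EReal :=
  sSup ((fun u => u z) '' {u | MinGrowth u ∧ ∀ x ∈ E, u x ≤ 0})

/-- The upper semicontinuous regularization `V_E*` of the Green function. -/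
def greenFnStar {m : ℕ} (E : Set (EuclideanSpace ℂ (Fin m)))
    (z : EuclideanSpace ℂ (Fin m)) : EReal :=
  Filter.limsup (greenFn E) (nhds z)

/-- `E ⊆ ℂ^m` is non-thin at `∞` if `lim_{R→∞} V_{E_R}(z) = 0` for all `z ∈ ℂ^m`,
where `E_R = E ∩ {|z| ≤ R}`. -/
def NonthinAtInfty {m : ℕ} (E : Set (EuclideanSpace ℂ (Fin m))) : Prop :=
  ∀ z, Tendsto (fun R : ℝ => greenFn (E ∩ closedBall 0 R) z) atTop (nhds (0 : EReal))

/-- `A ⊆ ℂ^m` is pluripolar if `A ⊆ {u = -∞}` for some plurisubharmonic `u ≢ -∞` on `ℂ^m`. -/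
def Pluripolar {m : ℕ} (A : Set (EuclideanSpace ℂ (Fin m))) : Prop :=
  ∃ u : EuclideanSpace ℂ (Fin m) → EReal, PshOn u Set.univ ∧ (∃ z, u z ≠ ⊥) ∧ ∀ a ∈ A, u a = ⊥

/-- The Robin constant `γ(K) = limsup_{z→∞} [V_K*(z) - log |z|]`.  The
`ℂ^m`-capacity is `C(K) = e^{-γ(K)}`, so that `log C(K) = -γ(K)`. -/
def robinConst {m : ℕ} (K : Set (EuclideanSpace ℂ (Fin m))) : EReal :=
  Filter.limsup (fun z => greenFnStar K z - ((Real.log ‖z‖ : ℝ) : EReal))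
    (Bornology.cobounded (EuclideanSpace ℂ (Fin m)))

/-- Subharmonic functions on `ℂ` of minimal growth: `u(z) - log|z| ≤ O(1)` as `|z| → ∞`. -/
def MinGrowth1 (u : ℂ → EReal) : Prop :=
  SubharmonicOn' u Set.univ ∧ ∃ C R₀ : ℝ, ∀ z : ℂ, R₀ ≤ ‖z‖ → u z ≤ ((Real.log ‖z‖ + C : ℝ) : EReal)

/-- One-variable Green function with pole at infinity. -/
def greenFn1 (E : Set ℂ) (z : ℂ) : EReal :=
  sSup ((fun u => u z) '' {u | MinGrowth1 u ∧ ∀ x ∈ E, u x ≤ 0})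

/-- `E ⊆ ℂ` is non-thin at `∞` (Green-function formulation). -/
def NonthinAtInfty1 (E : Set ℂ) : Prop :=
  ∀ z : ℂ, Tendsto (fun R : ℝ => greenFn1 (E ∩ closedBall 0 R) z) atTop (nhds (0 : EReal))

/-- `F ⊆ ℂ` is thin at a point `a`: either `a` is not a limit point of `F`, or some
function subharmonic near `a` satisfies `limsup_{z→a, z ∈ F \ {a}} u(z) < u(a)`. -/
def ThinAt (F : Set ℂ) (a : ℂ) : Prop :=
  a ∉ closure (F \ {a}) ∨
    ∃ U : Set ℂ, IsOpen U ∧ a ∈ U ∧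
      ∃ u : ℂ → EReal, SubharmonicOn' u U ∧
        Filter.limsup u (nhdsWithin a (F \ {a})) < u a


/-! Restricting a competitor `u ∈ 𝕃` for `V_{E_R}` to a line `w ↦ a + w • b` of `Δ` through `z`
gives a competitor of minimal growth for the one-variable Green function of the trace of `E`
cut off at radius `(R - ‖a‖) / ‖b‖`. Hence `0 ≤ V_{E_R}(z)` is bounded by a one-variable Green
function which tends to `0` as `R → ∞`, since the trace is non-thin at `∞`. -/

lemma le_re_of_forall_mem_sphere {f : ℂ → ℂ} {c : ℂ} {r t : ℝ} (hr : 0 < r)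
    (hf : DiffContOnCl ℂ f (ball c r)) (h : ∀ z ∈ sphere c r, t ≤ (f z).re) :
    ∀ z ∈ closedBall c r, t ≤ (f z).re := by
  -- maximum modulus for `exp (t - f)`
  have hg : DiffContOnCl ℂ (fun z => Complex.exp (t - f z)) (ball c r) :=
    Complex.differentiable_exp.comp_diffContOnCl (hf.const_sub _)
  have hfr : ∀ z ∈ frontier (ball c r), ‖Complex.exp (t - f z)‖ ≤ 1 := by
    rw [frontier_ball c hr.ne']
    intro z hz
    simpa [Complex.norm_exp] using h z hz
  intro z hz
  rw [← closure_ball c hr.ne'] at hz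
  simpa [Complex.norm_exp] using
    Complex.norm_le_of_forall_mem_frontier_norm_le isBounded_ball hg hfr hz

lemma subharmonicOn'_const (t : ℝ) (U : Set ℂ) : SubharmonicOn' (fun _ => (t : EReal)) U := by
  refine ⟨upperSemicontinuousOn_const, fun _ _ => EReal.coe_lt_top t, ?_⟩
  intro c r hr _ p hp z hz
  exact EReal.coe_le_coe_iff.mpr <| le_re_of_forall_mem_sphere hr p.differentiable.diffContOnCl
    (fun x hx => EReal.coe_le_coe_iff.mp (hp x hx)) z hz

lemma minGrowth_zero {m : ℕ} : MinGrowth (fun _ : EuclideanSpace ℂ (Fin m) => (0 : EReal)) := by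
  refine ⟨⟨upperSemicontinuousOn_const, fun _ _ => EReal.zero_lt_top,
    fun _ _ _ => subharmonicOn'_const 0 _⟩, 0, 1, fun z hz => ?_⟩
  exact EReal.coe_le_coe_iff.mpr (by simpa using Real.log_nonneg hz)

lemma greenFn_nonneg {m : ℕ} (F : Set (EuclideanSpace ℂ (Fin m)))
    (z : EuclideanSpace ℂ (Fin m)) : 0 ≤ greenFn F z :=
  le_sSup ⟨_, ⟨minGrowth_zero, fun _ _ => le_rfl⟩, rfl⟩

section Line

variable {V : Type*} [NormedAddCommGroup V] [NormedSpace ℂ V]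

lemma norm_add_smul_le (a b : V) (w : ℂ) : ‖a + w • b‖ ≤ ‖a‖ + ‖w‖ * ‖b‖ :=
  (norm_add_le _ _).trans_eq (by rw [norm_smul])

lemma norm_smul_sub_norm_le (a b : V) (w : ℂ) : ‖w‖ * ‖b‖ - ‖a‖ ≤ ‖a + w • b‖ := by
  have := norm_sub_le (a + w • b) a
  rw [add_sub_cancel_left, norm_smul] at this
  linarith

lemma mapsTo_line_closedBall (a b : V) (r : ℝ) :
    Set.MapsTo (fun w : ℂ => a + w • b) (closedBall 0 r) (closedBall 0 (‖a‖ + r * ‖b‖)) := by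
  intro w hw
  rw [mem_closedBall_zero_iff] at hw ⊢
  nlinarith [norm_add_smul_le a b w, norm_nonneg b]

lemma log_norm_add_smul_le {a b : V} {w : ℂ} (hw : 1 ≤ ‖w‖) (hpos : 0 < ‖a + w • b‖) :
    Real.log ‖a + w • b‖ ≤ Real.log ‖w‖ + Real.log (‖a‖ + ‖b‖) := by
  have hle : ‖a + w • b‖ ≤ ‖w‖ * (‖a‖ + ‖b‖) := by
    nlinarith [norm_add_smul_le a b w, norm_nonneg a]
  have hab : 0 < ‖a‖ + ‖b‖ := pos_of_mul_pos_right (hpos.trans_le hle) (by linarith)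
  rw [← Real.log_mul (by linarith) hab.ne']
  exact Real.log_le_log hpos hle

end Line

lemma MinGrowth.comp_line {m : ℕ} {u : EuclideanSpace ℂ (Fin m) → EReal} (hu : MinGrowth u)
    {a b : EuclideanSpace ℂ (Fin m)} (hb : b ≠ 0) : MinGrowth1 (fun w => u (a + w • b)) := by
  obtain ⟨⟨-, -, hline⟩, C, R₀, hgrowth⟩ := hu
  refine ⟨by simpa using hline a b hb, C + Real.log (‖a‖ + ‖b‖),
    max 1 ((max R₀ 1 + ‖a‖) / ‖b‖), fun w hw => ?_⟩
  have hw₁ : 1 ≤ ‖w‖ := le_of_max_le_left hw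
  have hfar : max R₀ 1 ≤ ‖a + w • b‖ := by
    have := (div_le_iff₀ (norm_pos_iff.mpr hb)).mp (le_of_max_le_right hw)
    linarith [norm_smul_sub_norm_le a b w]
  have hlog := log_norm_add_smul_le hw₁ (by linarith [le_max_right R₀ 1])
  calc u (a + w • b) ≤ ((Real.log ‖a + w • b‖ + C : ℝ) : EReal) :=
        hgrowth _ (le_of_max_le_left hfar)
    _ ≤ ((Real.log ‖w‖ + (C + Real.log (‖a‖ + ‖b‖)) : ℝ) : EReal) :=
        EReal.coe_le_coe_iff.mpr (by linarith)

lemma greenFn_le_greenFn1_of_mapsTo {m : ℕ} {F : Set (EuclideanSpace ℂ (Fin m))} {G : Set ℂ}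
    {a b : EuclideanSpace ℂ (Fin m)} (hb : b ≠ 0) (hG : Set.MapsTo (fun w => a + w • b) G F)
    (w₀ : ℂ) : greenFn F (a + w₀ • b) ≤ greenFn1 G w₀ := by
  refine sSup_le ?_
  rintro _ ⟨u, ⟨hu, hu0⟩, rfl⟩
  exact le_sSup ⟨_, ⟨hu.comp_line hb, fun w hw => hu0 _ (hG hw)⟩, rfl⟩

theorem nonthinAtInfty_of_lines_general {m : ℕ}
    (E : Set (EuclideanSpace ℂ (Fin m)))
    (Δ : Set (EuclideanSpace ℂ (Fin m) × EuclideanSpace ℂ (Fin m)))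
    (hΔ : ∀ p ∈ Δ, p.2 ≠ 0)
    (hcover : ∀ z : EuclideanSpace ℂ (Fin m), ∃ p ∈ Δ, ∃ w : ℂ, z = p.1 + w • p.2)
    (hlines : ∀ p ∈ Δ, NonthinAtInfty1 {w : ℂ | p.1 + w • p.2 ∈ E}) :
    NonthinAtInfty E := by
  intro z
  obtain ⟨⟨a, b⟩, hp, w₀, rfl⟩ := hcover z
  have hb : 0 < ‖b‖ := norm_pos_iff.mpr (hΔ _ hp)
  have hradius : Tendsto (fun R : ℝ => (R - ‖a‖) / ‖b‖) atTop atTop :=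
    (tendsto_atTop_add_const_right _ _ tendsto_id).atTop_div_const hb
  refine tendsto_of_tendsto_of_tendsto_of_le_of_le tendsto_const_nhds
    ((hlines _ hp w₀).comp hradius) (fun R => greenFn_nonneg _ _) fun R => ?_
  have hmaps := (Set.mapsTo_preimage (fun w : ℂ => a + w • b) E).inter_inter
    (mapsTo_line_closedBall a b ((R - ‖a‖) / ‖b‖))
  rw [div_mul_cancel₀ _ hb.ne', add_sub_cancel] at hmaps
  exact greenFn_le_greenFn1_of_mapsTo (hΔ _ hp) hmaps w₀

/-- **Remark 1.** Let `Δ` be a family of complex lines (parametrized affinely as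
`w ↦ a + w • b`, `b ≠ 0`) covering `ℂ^m`.  If `E` is closed and for each line of `Δ`
the trace `{w : ℂ | a + w • b ∈ E}` is non-thin at `∞` in `ℂ`, then `E` is non-thin
at `∞` in `ℂ^m`. -/
theorem nonthinAtInfty_of_lines {m : ℕ}
    (E : Set (EuclideanSpace ℂ (Fin m))) (hE : IsClosed E)
    (Δ : Set (EuclideanSpace ℂ (Fin m) × EuclideanSpace ℂ (Fin m)))
    (hΔ : ∀ p ∈ Δ, p.2 ≠ 0)
    (hcover : ∀ z : EuclideanSpace ℂ (Fin m), ∃ p ∈ Δ, ∃ w : ℂ, z = p.1 + w • p.2)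
    (hlines : ∀ p ∈ Δ, NonthinAtInfty1 {w : ℂ | p.1 + w • p.2 ∈ E}) :
    NonthinAtInfty E :=
  nonthinAtInfty_of_lines_general E Δ hΔ hcover hlines

end
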